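/- Gauss–Manin system identity: let 0 < α, β < 1 with α ≠ β, and set f(t) = t^{β−α}·₂F₁(1−α, β; 1−α+β; t) and g(t) = t^{β−α}·₂F₁(1−α, β−1; 1−α+β; t) for 0 < t < 1. Then t·f'(t) = −(1−β)·f(t) + (1−α)·(1−t)^{−1}·g(t) and t·g'(t) = −(1−β)·f(t) + (1−α)·g(t). -/

import Mathlib

open scoped BigOperators
open Real MeasureTheory Filter Set

noncomputable def poch (a : ℝ) (n : ℕ) : ℝ := ∏ i ∈ Finset.range n, (a + i)

noncomputable def F21 (a b c t : ℝ) : ℝ :=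
  ∑' n : ℕ, poch a n * poch b n / (poch c n * n.factorial) * t ^ n

noncomputable def F32 (a b c d e t : ℝ) : ℝ :=
  ∑' n : ℕ, poch a n * poch b n * poch c n / (poch d n * poch e n * n.factorial) * t ^ n

noncomputable def Beta (x y : ℝ) : ℝ := Real.Gamma x * Real.Gamma y / Real.Gamma (x + y)

/-! Write `F = ₂F₁(a, b; c)`, `G = ₂F₁(a, b-1; c)` with coefficients `c_n(a, b, c)`, where
`a = 1-α`, `b = β`, `c = a + b`, and `θ = t d/dt`. Since `θ (t^p F) = t^p (p + θ) F`, both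
identities reduce to relations between coefficients. The relation
`n c_n(a, b-1, c) = (1-b) (c_n(a, b-1, c) - c_n(a, b, c))` gives `θ G = (1-b) (G - F)`, and, because
`c = a + b`, the relation `(a+n+1) c_{n+1}(a, b, c) = a c_{n+1}(a, b-1, c) + (a+n) c_n(a, b, c)`
gives `(1-t) (a + θ) F = a G` after shifting the index. For `0 < α < 1` and `0 < β` the ratio
`c_{n+1}/c_n` has absolute value at most one, so the coefficients are bounded by one and all series
may be differentiated termwise on `(0, 1)`. -/

lemma poch_zero (a : ℝ) : poch a 0 = 1 := Finset.prod_range_zero _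

lemma poch_succ (a : ℝ) (n : ℕ) : poch a (n + 1) = poch a n * (a + n) :=
  Finset.prod_range_succ _ _

lemma poch_sub_one_succ (b : ℝ) (n : ℕ) : poch (b - 1) (n + 1) = (b - 1) * poch b n := by
  rw [poch, Finset.prod_range_succ', poch]
  push_cast
  rw [add_zero, mul_comm]
  congr 1
  exact Finset.prod_congr rfl fun i _ => by ring

noncomputable def hypergeomCoeff (a b c : ℝ) (n : ℕ) : ℝ :=
  poch a n * poch b n / (poch c n * n.factorial)

lemma F21_eq_tsum (a b c t : ℝ) : F21 a b c t = ∑' n, hypergeomCoeff a b c n * t ^ n := rfl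

lemma hypergeomCoeff_zero (a b c : ℝ) : hypergeomCoeff a b c 0 = 1 := by
  simp [hypergeomCoeff, poch_zero]

lemma hypergeomCoeff_succ (a b c : ℝ) (n : ℕ) :
    hypergeomCoeff a b c (n + 1)
      = hypergeomCoeff a b c n * ((a + n) * (b + n) / ((c + n) * (n + 1))) := by
  simp only [hypergeomCoeff, poch_succ, Nat.factorial_succ]
  rw [div_mul_div_comm]
  push_cast
  congr 1 <;> ring

lemma hypergeomCoeff_sub_one_succ (a b c : ℝ) (n : ℕ) :
    hypergeomCoeff a (b - 1) c (n + 1)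
      = hypergeomCoeff a b c n * ((a + n) * (b - 1) / ((c + n) * (n + 1))) := by
  rw [hypergeomCoeff, poch_sub_one_succ]
  simp only [hypergeomCoeff, poch_succ, Nat.factorial_succ]
  rw [div_mul_div_comm]
  push_cast
  congr 1 <;> ring

lemma abs_hypergeomCoeff_le_one {a b c : ℝ}
    (h : ∀ k : ℕ, |(a + k) * (b + k)| ≤ (c + k) * (k + 1)) (n : ℕ) :
    |hypergeomCoeff a b c n| ≤ 1 := by
  induction n with
  | zero => simp [hypergeomCoeff_zero]
  | succ n ih =>
    have hratio : |(a + n) * (b + n) / ((c + n) * (n + 1))| ≤ 1 := by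
      rw [abs_div]
      exact div_le_one_of_le₀ ((h n).trans (le_abs_self _)) (abs_nonneg _)
    rw [hypergeomCoeff_succ, abs_mul]
    simpa using mul_le_one₀ ih (abs_nonneg _) hratio

lemma nat_mul_hypergeomCoeff_sub_one (a b c : ℝ) (n : ℕ) :
    n * hypergeomCoeff a (b - 1) c n
      = (1 - b) * (hypergeomCoeff a (b - 1) c n - hypergeomCoeff a b c n) := by
  cases n with
  | zero => simp [hypergeomCoeff_zero]
  | succ n =>
    rw [hypergeomCoeff_sub_one_succ, hypergeomCoeff_succ]
    push_cast
    ring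

lemma hypergeomCoeff_succ_contiguous {a b : ℝ} {n : ℕ} (hab : a + b + n ≠ 0) :
    (a + (n + 1)) * hypergeomCoeff a b (a + b) (n + 1)
      = a * hypergeomCoeff a (b - 1) (a + b) (n + 1) + (a + n) * hypergeomCoeff a b (a + b) n := by
  rw [hypergeomCoeff_succ, hypergeomCoeff_sub_one_succ]
  field_simp
  ring

section PowerSeries

variable {u : ℕ → ℝ} {C : ℝ}

lemma summable_mul_pow_of_abs_le (hu : ∀ n, |u n| ≤ C) {x : ℝ} (hx : |x| < 1) :
    Summable (fun n => u n * x ^ n) := by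
  refine .of_norm_bounded ((summable_geometric_of_lt_one (abs_nonneg x) hx).mul_left C) fun n => ?_
  rw [norm_mul, norm_pow, Real.norm_eq_abs, Real.norm_eq_abs]
  exact mul_le_mul_of_nonneg_right (hu n) (by positivity)

lemma summable_nat_mul_mul_pow_of_abs_le (hu : ∀ n, |u n| ≤ C) {x : ℝ} (hx : |x| < 1) :
    Summable (fun n : ℕ => n * u n * x ^ n) := by
  have hgeom := summable_pow_mul_geometric_of_norm_lt_one (R := ℝ) 1 (r := |x|)
    (by rwa [Real.norm_eq_abs, abs_abs])
  refine .of_norm_bounded (hgeom.mul_left C) fun n => ?_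
  rw [norm_mul, norm_mul, norm_pow, Real.norm_eq_abs, Real.norm_eq_abs, Real.norm_eq_abs,
    Nat.abs_cast, pow_one]
  calc (n : ℝ) * |u n| * |x| ^ n ≤ n * C * |x| ^ n := by gcongr; exact hu n
    _ = C * (n * |x| ^ n) := by ring

lemma hasDerivAt_tsum_mul_pow (hu : ∀ n, |u n| ≤ C) {t : ℝ} (ht : |t| < 1) :
    HasDerivAt (fun s => ∑' n, u n * s ^ n) (∑' n, u n * (n * t ^ (n - 1))) t := by
  set r := (1 + |t|) / 2
  have hr0 : 0 < r := by positivity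
  have htr : t ∈ Ioo (-r) r := abs_lt.mp (by simp only [r]; linarith)
  have hsum : Summable (fun n : ℕ => C * (n * r ^ (n - 1))) := by
    refine Summable.mul_left C <| ((summable_pow_mul_geometric_of_norm_lt_one 1 (r := r)
      (by rw [Real.norm_eq_abs, abs_of_pos hr0]; simp only [r]; linarith)).div_const r).congr
      fun n => ?_
    cases n with
    | zero => simp
    | succ n => rw [Nat.add_sub_cancel]; field_simp; ring
  refine hasDerivAt_tsum_of_isPreconnected hsum isOpen_Ioo isPreconnected_Ioo
    (fun n y _ => (hasDerivAt_pow n y).const_mul (u n)) (fun n y hy => ?_) htr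
    (summable_mul_pow_of_abs_le hu ht) htr
  have hyr : |y| ≤ r := abs_le.mpr ⟨hy.1.le, hy.2.le⟩
  rw [norm_mul, norm_mul, norm_pow, Real.norm_eq_abs, Real.norm_eq_abs, Real.norm_eq_abs,
    Nat.abs_cast]
  gcongr
  · exact (abs_nonneg _).trans (hu 0)
  · exact hu n

lemma mul_tsum_nat_mul_pow_sub_one (u : ℕ → ℝ) (t : ℝ) :
    t * ∑' n, u n * (n * t ^ (n - 1)) = ∑' n : ℕ, n * u n * t ^ n := by
  rw [← tsum_mul_left]
  refine tsum_congr fun n => ?_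
  cases n with
  | zero => simp
  | succ n => rw [Nat.add_sub_cancel, pow_succ]; ring

lemma one_sub_mul_tsum_eq_tsum_of_succ {P Q : ℕ → ℝ} {t : ℝ} (hP : Summable P)
    (hQ : Summable Q) (h0 : P 0 = Q 0) (hsucc : ∀ n, P (n + 1) = Q (n + 1) + t * P n) :
    (1 - t) * ∑' n, P n = ∑' n, Q n := by
  have hshift : ∑' n, P n = ∑' n, Q n + t * ∑' n, P n := by
    conv_lhs => rw [hP.tsum_eq_zero_add]
    rw [hQ.tsum_eq_zero_add, ← tsum_mul_left, h0, add_assoc,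
      ← ((summable_nat_add_iff 1).2 hQ).tsum_add (hP.mul_left t)]
    simp only [hsucc]
  linear_combination hshift

lemma mul_deriv_rpow_mul {F : ℝ → ℝ} {F' t : ℝ} (hF : HasDerivAt F F' t) (ht : 0 < t) (p : ℝ) :
    t * deriv (fun s => s ^ p * F s) t = t ^ p * (p * F t + t * F') := by
  rw [((hasDerivAt_rpow_const (Or.inl ht.ne')).fun_mul hF).deriv]
  have : t * t ^ (p - 1) = t ^ p := by
    rw [mul_comm, ← rpow_add_one ht.ne', sub_add_cancel]
  linear_combination (p * F t) * this

end PowerSeries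

lemma mul_deriv_rpow_mul_F21 {a b c C t : ℝ} (hu : ∀ n, |hypergeomCoeff a b c n| ≤ C)
    (ht0 : 0 < t) (ht : |t| < 1) (p : ℝ) :
    t * deriv (fun s => s ^ p * F21 a b c s) t
      = t ^ p * (p * F21 a b c t + ∑' n : ℕ, n * hypergeomCoeff a b c n * t ^ n) := by
  have hF : HasDerivAt (F21 a b c) (∑' n, hypergeomCoeff a b c n * (n * t ^ (n - 1))) t :=
    hasDerivAt_tsum_mul_pow hu ht
  rw [mul_deriv_rpow_mul hF ht0, mul_tsum_nat_mul_pow_sub_one]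

lemma tsum_nat_mul_hypergeomCoeff_sub_one_mul_pow {a b c t : ℝ}
    (hF : Summable fun n => hypergeomCoeff a b c n * t ^ n)
    (hG : Summable fun n => hypergeomCoeff a (b - 1) c n * t ^ n) :
    ∑' n : ℕ, n * hypergeomCoeff a (b - 1) c n * t ^ n
      = (1 - b) * (F21 a (b - 1) c t - F21 a b c t) := by
  rw [F21_eq_tsum, F21_eq_tsum, ← hG.tsum_sub hF, ← tsum_mul_left]
  refine tsum_congr fun n => ?_
  rw [nat_mul_hypergeomCoeff_sub_one]
  ring

lemma one_sub_mul_F21_add_tsum_nat_mul {a b t : ℝ} (hab : ∀ n : ℕ, a + b + n ≠ 0)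
    (hF : Summable fun n => hypergeomCoeff a b (a + b) n * t ^ n)
    (hθF : Summable fun n : ℕ => n * hypergeomCoeff a b (a + b) n * t ^ n)
    (hG : Summable fun n => hypergeomCoeff a (b - 1) (a + b) n * t ^ n) :
    (1 - t) * (a * F21 a b (a + b) t + ∑' n : ℕ, n * hypergeomCoeff a b (a + b) n * t ^ n)
      = a * F21 a (b - 1) (a + b) t := by
  have hsum : Summable fun n : ℕ => (a + n) * hypergeomCoeff a b (a + b) n * t ^ n :=
    ((hF.mul_left a).add hθF).congr fun n => by ring
  have hsplit : a * F21 a b (a + b) t + ∑' n : ℕ, n * hypergeomCoeff a b (a + b) n * t ^ n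
      = ∑' n : ℕ, (a + n) * hypergeomCoeff a b (a + b) n * t ^ n := by
    rw [F21_eq_tsum, ← tsum_mul_left, ← (hF.mul_left a).tsum_add hθF]
    exact tsum_congr fun n => by ring
  rw [hsplit, F21_eq_tsum]
  refine (one_sub_mul_tsum_eq_tsum_of_succ hsum (hG.mul_left a) ?_ fun n => ?_).trans tsum_mul_left
  · simp [hypergeomCoeff_zero]
  · push_cast
    linear_combination t ^ (n + 1) * hypergeomCoeff_succ_contiguous (hab n)

theorem gauss_manin_first_row_general (α β t : ℝ) (hα0 : 0 < α) (hα1 : α < 1) (hβ0 : 0 < β)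
    (ht0 : 0 < t) (ht1 : t < 1) :
    (t * deriv (fun s => s ^ (β - α) * F21 (1 - α) β (1 - α + β) s) t
      = -(1 - β) * (t ^ (β - α) * F21 (1 - α) β (1 - α + β) t)
        + (1 - α) * (1 - t)⁻¹ * (t ^ (β - α) * F21 (1 - α) (β - 1) (1 - α + β) t)) ∧
    (t * deriv (fun s => s ^ (β - α) * F21 (1 - α) (β - 1) (1 - α + β) s) t
      = -(1 - β) * (t ^ (β - α) * F21 (1 - α) β (1 - α + β) t)
        + (1 - α) * (t ^ (β - α) * F21 (1 - α) (β - 1) (1 - α + β) t)) := by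
  have hF : ∀ n, |hypergeomCoeff (1 - α) β (1 - α + β) n| ≤ 1 :=
    abs_hypergeomCoeff_le_one fun k => by
      rw [abs_of_nonneg (by nlinarith)]
      nlinarith
  have hG : ∀ n, |hypergeomCoeff (1 - α) (β - 1) (1 - α + β) n| ≤ 1 :=
    abs_hypergeomCoeff_le_one fun k => by
      rw [abs_le]
      constructor <;> nlinarith
  have ht : |t| < 1 := abs_lt.mpr ⟨by linarith, ht1⟩
  have hθG := tsum_nat_mul_hypergeomCoeff_sub_one_mul_pow
    (summable_mul_pow_of_abs_le hF ht) (summable_mul_pow_of_abs_le hG ht)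
  have hθF := one_sub_mul_F21_add_tsum_nat_mul (fun n => by positivity)
    (summable_mul_pow_of_abs_le hF ht) (summable_nat_mul_mul_pow_of_abs_le hF ht)
    (summable_mul_pow_of_abs_le hG ht)
  have h1t : 1 - t ≠ 0 := by linarith
  rw [mul_deriv_rpow_mul_F21 hF ht0 ht, mul_deriv_rpow_mul_F21 hG ht0 ht, hθG]
  refine ⟨?_, by ring⟩
  field_simp
  linear_combination hθF

theorem gauss_manin_first_row (α β t : ℝ) (hα0 : 0 < α) (hα1 : α < 1) (hβ0 : 0 < β)
    (hβ1 : β < 1) (hαβ : α ≠ β) (ht0 : 0 < t) (ht1 : t < 1) :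
    (t * deriv (fun s => s ^ (β - α) * F21 (1 - α) β (1 - α + β) s) t
      = -(1 - β) * (t ^ (β - α) * F21 (1 - α) β (1 - α + β) t)
        + (1 - α) * (1 - t)⁻¹ * (t ^ (β - α) * F21 (1 - α) (β - 1) (1 - α + β) t)) ∧
    (t * deriv (fun s => s ^ (β - α) * F21 (1 - α) (β - 1) (1 - α + β) s) t
      = -(1 - β) * (t ^ (β - α) * F21 (1 - α) β (1 - α + β) t)
        + (1 - α) * (t ^ (β - α) * F21 (1 - α) (β - 1) (1 - α + β) t)) :=
  gauss_manin_first_row_general α β t hα0 hα1 hβ0 ht0 ht1
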